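/- arXiv:2503.00632 — 5 statements merged into one kernel-verified Lean document; each statement's English description precedes it below -/
import Mathlib

section
/- Let (X_t)_{t≥0} be a submartingale with bounded increments |X_{t+1} − X_t| ≤ b and such that E[exp(−r*(X_{t+1} − X_t)) | F_t] ≤ 1 almost surely for every t, for a constant r* > 0 independent of t. Then for X_0 = u > 0 the ruin probability P(∃ t ≥ 1, X_t ≤ 0) is at most exp(−r* u). -/
/-!
The exponential-moment condition makes `exp (-r* X_t)` a nonnegative supermartingale (bounded
increments give integrability). By Ville's maximal inequality it reaches `1`, which it does as
soon as `X_t ≤ 0`, with probability at most `E[exp (-r* X_0)] = exp (-r* u)`.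
-/

open MeasureTheory Real

namespace MeasureTheory

variable {Ω : Type*} {m0 : MeasurableSpace Ω} {P : Measure Ω}

lemma ae_sub_mul_le_of_increment_ge {X : ℕ → Ω → ℝ} {u b : ℝ}
    (h0 : ∀ᵐ ω ∂P, u ≤ X 0 ω) (hinc : ∀ t, ∀ᵐ ω ∂P, -b ≤ X (t + 1) ω - X t ω) (t : ℕ) :
    ∀ᵐ ω ∂P, u - t * b ≤ X t ω := by
  induction t with
  | zero => simpa using h0
  | succ t ih =>
    filter_upwards [ih, hinc t] with ω hX hstep
    push_cast
    linarith

lemma integrable_exp_neg_mul_of_ae_le [IsFiniteMeasure P] {f : Ω → ℝ} {r c : ℝ}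
    (hf : AEStronglyMeasurable f P) (hr : 0 ≤ r) (hc : ∀ᵐ ω ∂P, c ≤ f ω) :
    Integrable (fun ω => exp (-r * f ω)) P := by
  refine (integrable_const (exp (-r * c))).mono'
    (continuous_exp.comp_aestronglyMeasurable (hf.const_mul (-r))) ?_
  filter_upwards [hc] with ω hω
  rw [norm_of_nonneg (exp_pos _).le, exp_le_exp]
  nlinarith

lemma supermartingale_exp_neg_mul [IsFiniteMeasure P] {F : Filtration ℕ m0} {X : ℕ → Ω → ℝ}
    {r : ℝ} (hX : StronglyAdapted F X) (hint : ∀ t, Integrable (fun ω => exp (-r * X t ω)) P)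
    (hint_inc : ∀ t, Integrable (fun ω => exp (-r * (X (t + 1) ω - X t ω))) P)
    (hinc : ∀ t, ∀ᵐ ω ∂P, P[fun ω' => exp (-r * (X (t + 1) ω' - X t ω')) | F t] ω ≤ 1) :
    Supermartingale (fun t ω => exp (-r * X t ω)) F P := by
  have hadapted : StronglyAdapted F fun t ω => exp (-r * X t ω) := fun t =>
    continuous_exp.comp_stronglyMeasurable ((hX t).const_mul (-r))
  refine supermartingale_nat hadapted hint fun t => ?_
  have hsplit : (fun ω => exp (-r * X (t + 1) ω)) =
      (fun ω => exp (-r * X t ω)) * fun ω => exp (-r * (X (t + 1) ω - X t ω)) := by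
    funext ω
    rw [Pi.mul_apply, ← exp_add]
    ring_nf
  have hpull := condExp_mul_of_stronglyMeasurable_left (m := F t) (hadapted t)
    (hsplit ▸ hint (t + 1)) (hint_inc t)
  rw [hsplit]
  filter_upwards [hpull, hinc t] with ω hω hle
  rw [hω, Pi.mul_apply]
  exact mul_le_of_le_one_right (exp_pos _).le hle

lemma Supermartingale.expected_stoppedValue_le [IsFiniteMeasure P] {F : Filtration ℕ m0}
    {M : ℕ → Ω → ℝ} (hM : Supermartingale M F P) {σ τ : Ω → ℕ∞} (hσ : IsStoppingTime F σ)
    (hτ : IsStoppingTime F τ) (hle : σ ≤ τ) {N : ℕ} (hbdd : ∀ ω, τ ω ≤ N) :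
    ∫ ω, stoppedValue M τ ω ∂P ≤ ∫ ω, stoppedValue M σ ω ∂P := by
  have := hM.neg.expected_stoppedValue_mono hσ hτ hle hbdd
  simpa [stoppedValue, integral_neg] using this

/-- Stop `M` when it first reaches `[ε, ∞)` before time `n` and apply Markov's inequality to
the stopped value, whose mean is at most that of `M 0` by optional stopping. -/
lemma Supermartingale.ville_ineq_finite [IsFiniteMeasure P] {F : Filtration ℕ m0}
    {M : ℕ → Ω → ℝ} (hM : Supermartingale M F P) (hnonneg : 0 ≤ M) {ε : ℝ} (hε : 0 ≤ ε) (n : ℕ) :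
    ε * P.real {ω | ∃ t ≤ n, ε ≤ M t ω} ≤ ∫ ω, M 0 ω ∂P := by
  set τ : Ω → WithTop ℕ := fun ω => (hittingBtwn M (Set.Ici ε) 0 n ω : ℕ)
  have hτ : IsStoppingTime F τ :=
    hM.stronglyAdapted.adapted.isStoppingTime_hittingBtwn measurableSet_Ici
  have hτ_le : ∀ ω, τ ω ≤ n := fun ω => WithTop.coe_le_coe.mpr (hittingBtwn_le ω)
  have hreach : {ω | ∃ t ≤ n, ε ≤ M t ω} ⊆ {ω | ε ≤ stoppedValue M τ ω} :=
    fun ω ⟨t, htn, ht⟩ => stoppedValue_hittingBtwn_mem ⟨t, ⟨t.zero_le, htn⟩, ht⟩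
  calc ε * P.real {ω | ∃ t ≤ n, ε ≤ M t ω}
      ≤ ε * P.real {ω | ε ≤ stoppedValue M τ ω} :=
        mul_le_mul_of_nonneg_left (measureReal_mono hreach) hε
    _ ≤ ∫ ω, stoppedValue M τ ω ∂P :=
        mul_meas_ge_le_integral_of_nonneg (ae_of_all _ fun ω => hnonneg _ ω)
          (integrable_stoppedValue ℕ hτ hM.integrable hτ_le) ε
    _ ≤ ∫ ω, stoppedValue M (fun _ => ((0 : ℕ) : WithTop ℕ)) ω ∂P :=
        hM.expected_stoppedValue_le (isStoppingTime_const F 0) hτ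
          (fun _ => WithTop.coe_le_coe.mpr (Nat.zero_le _)) hτ_le
    _ = ∫ ω, M 0 ω ∂P := rfl

lemma Supermartingale.ville_ineq [IsFiniteMeasure P] {F : Filtration ℕ m0}
    {M : ℕ → Ω → ℝ} (hM : Supermartingale M F P) (hnonneg : 0 ≤ M) {ε : ℝ} (hε : 0 ≤ ε) :
    ENNReal.ofReal ε * P {ω | ∃ t, ε ≤ M t ω} ≤ ENNReal.ofReal (∫ ω, M 0 ω ∂P) := by
  have hunion : {ω | ∃ t, ε ≤ M t ω} = ⋃ n, {ω | ∃ t ≤ n, ε ≤ M t ω} := by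
    ext ω
    simp only [Set.mem_ofPred_eq, Set.mem_iUnion]
    exact ⟨fun ⟨t, ht⟩ => ⟨t, t, le_rfl, ht⟩, fun ⟨_, t, _, ht⟩ => ⟨t, ht⟩⟩
  have hmono : Monotone fun n => {ω | ∃ t ≤ n, ε ≤ M t ω} :=
    fun _ _ hmn _ ⟨t, htn, ht⟩ => ⟨t, htn.trans hmn, ht⟩
  rw [hunion, hmono.measure_iUnion, ENNReal.mul_iSup]
  refine iSup_le fun n => ?_
  rw [← ofReal_measureReal, ← ENNReal.ofReal_mul hε]
  exact ENNReal.ofReal_le_ofReal (hM.ville_ineq_finite hnonneg hε n)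

end MeasureTheory

theorem stmt_9_general {Ω : Type*} {m0 : MeasurableSpace Ω} (P : Measure Ω)
    [IsProbabilityMeasure P] (F : Filtration ℕ m0)
    (X : ℕ → Ω → ℝ) (b u rstar : ℝ) (hr : 0 < rstar)
    (hsub : Submartingale X F P)
    (hX0 : ∀ ω, X 0 ω = u)
    (hbound : ∀ t, ∀ᵐ ω ∂P, |X (t + 1) ω - X t ω| ≤ b)
    (hadj : ∀ t, ∀ᵐ ω ∂P,
      (P[fun ω' => Real.exp (-rstar * (X (t + 1) ω' - X t ω')) | F t]) ω ≤ 1) :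
    P {ω | ∃ t : ℕ, 1 ≤ t ∧ X t ω ≤ 0} ≤ ENNReal.ofReal (Real.exp (-rstar * u)) := by
  have hdown : ∀ t, ∀ᵐ ω ∂P, -b ≤ X (t + 1) ω - X t ω := fun t =>
    (hbound t).mono fun _ h => (abs_le.mp h).1
  have hmeas : ∀ t, AEStronglyMeasurable (X t) P := fun t =>
    ((hsub.stronglyAdapted t).mono (F.le t)).aestronglyMeasurable
  have hsuper : Supermartingale (fun t ω => exp (-rstar * X t ω)) F P :=
    supermartingale_exp_neg_mul hsub.stronglyAdapted
      (fun t => integrable_exp_neg_mul_of_ae_le (hmeas t) hr.le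
        (ae_sub_mul_le_of_increment_ge (ae_of_all _ fun ω => (hX0 ω).ge) hdown t))
      (fun t => integrable_exp_neg_mul_of_ae_le ((hmeas (t + 1)).sub (hmeas t)) hr.le (hdown t))
      hadj
  have hruin : {ω | ∃ t, 1 ≤ t ∧ X t ω ≤ 0} ⊆ {ω | ∃ t, 1 ≤ exp (-rstar * X t ω)} :=
    fun ω ⟨t, _, ht⟩ => ⟨t, one_le_exp (by nlinarith)⟩
  calc P {ω | ∃ t, 1 ≤ t ∧ X t ω ≤ 0}
      ≤ ENNReal.ofReal 1 * P {ω | ∃ t, 1 ≤ exp (-rstar * X t ω)} := by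
        simpa using measure_mono hruin
    _ ≤ ENNReal.ofReal (∫ ω, exp (-rstar * X 0 ω) ∂P) :=
        hsuper.ville_ineq (fun _ _ => (exp_pos _).le) zero_le_one
    _ = ENNReal.ofReal (exp (-rstar * u)) := by simp [hX0]

/-- Adapted Lundberg inequality (Lemma A.6): a submartingale with bounded
increments whose increments satisfy a uniform conditional exponential-moment
bound E[exp(−r*(X_{t+1}−X_t)) | F_t] ≤ 1 a.s., started at u > 0, reaches the
nonpositive half-line with probability at most exp(−r*·u). -/
theorem stmt_9 {Ω : Type*} {m0 : MeasurableSpace Ω} (P : Measure Ω)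
    [IsProbabilityMeasure P] (F : Filtration ℕ m0)
    (X : ℕ → Ω → ℝ) (b u rstar : ℝ) (hb : 0 < b) (hu : 0 < u) (hr : 0 < rstar)
    (hsub : Submartingale X F P)
    (hX0 : ∀ ω, X 0 ω = u)
    (hbound : ∀ t, ∀ᵐ ω ∂P, |X (t + 1) ω - X t ω| ≤ b)
    (hadj : ∀ t, ∀ᵐ ω ∂P,
      (P[fun ω' => Real.exp (-rstar * (X (t + 1) ω' - X t ω')) | F t]) ω ≤ 1) :
    P {ω | ∃ t : ℕ, 1 ≤ t ∧ X t ω ≤ 0} ≤ ENNReal.ofReal (Real.exp (-rstar * u)) :=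
  stmt_9_general P F X b u rstar hr hsub hX0 hbound hadj
end

section
/- Let (X_t) be a submartingale with E[X_{t+1} | F_t] ≥ X_t + c for a constant c > 0, integer-valued bounded increments Z_{t+1} = X_{t+1} − X_t with |Z_{t+1}| ≤ b, and P(Z_{t+1} ≥ z* | F_t) ≥ l, P(Z_{t+1} ≤ −z* | F_t) ≥ l for constants z*, l > 0. Then there is a constant p* > 0, independent of initial conditions, such that P(X_t > X_1 for all t ≥ 2 | F_1) ≥ p* on the event Z_1 ≥ z*. -/
/-!
With `r = min (1 / b) (c / b ^ 2)`, the bound `exp x ≤ 1 + x + x ^ 2` for `|x| ≤ 1` turns the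
drift `c` into the Lundberg inequality `E[exp (-r Z_{t+1}) | F_t] ≤ 1`, so after time `1` the
process `exp (-r (X_t - X_1))` is a nonnegative supermartingale. By Ville's maximal inequality,
on an `F_2`-event where the second increment is at least `z*` this process ever reaches `1`, i.e.
`X` ever falls back to `X_1`, with probability at most `exp (-r z*)`. Since the second increment is
at least `z*` with conditional probability at least `l`, the conditional probability of never
falling back is at least `l (1 - exp (-r z*))`.
-/

open MeasureTheory

namespace MeasureTheory

variable {Ω : Type*} {m m0 : MeasurableSpace Ω} {μ : Measure Ω}

-- `k + t` rather than `t + k`, so that `F.shift k (t + 1)` unfolds to `F (k + t + 1)`.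
def Filtration.shift (F : Filtration ℕ m0) (k : ℕ) : Filtration ℕ m0 where
  seq t := F (k + t)
  mono' _ _ h := F.mono (by omega)
  le' _ := F.le _

theorem ae_norm_exp_neg_mul_le {Z : Ω → ℝ} {b r : ℝ} (hr : 0 ≤ r) (hZ : ∀ᵐ ω ∂μ, |Z ω| ≤ b) :
    ∀ᵐ ω ∂μ, ‖Real.exp (-(r * Z ω))‖ ≤ Real.exp (r * b) := by
  filter_upwards [hZ] with ω hω
  rw [Real.norm_eq_abs, Real.abs_exp, Real.exp_le_exp]
  nlinarith [neg_abs_le (Z ω)]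

theorem condExp_exp_neg_mul_le_one [IsFiniteMeasure μ] (hm : m ≤ m0) {Z : Ω → ℝ} {b c r : ℝ}
    (hZ : Integrable Z μ) (hZb : ∀ᵐ ω ∂μ, |Z ω| ≤ b) (hZc : ∀ᵐ ω ∂μ, c ≤ μ[Z | m] ω)
    (hr : 0 ≤ r) (hrb : r * b ≤ 1) (hrc : r * b ^ 2 ≤ c) :
    μ[fun ω => Real.exp (-(r * Z ω)) | m] ≤ᵐ[μ] 1 := by
  have hquad :
      (fun ω => Real.exp (-(r * Z ω))) ≤ᵐ[μ] fun ω => (1 + r ^ 2 * b ^ 2) - r • Z ω := by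
    filter_upwards [hZb] with ω hω
    have h1 : |-(r * Z ω)| ≤ 1 := by
      rw [abs_neg, abs_mul, abs_of_nonneg hr]; nlinarith [abs_nonneg (Z ω)]
    have h2 := (abs_le.mp (Real.abs_exp_sub_one_sub_id_le h1)).2
    have h3 : Z ω ^ 2 ≤ b ^ 2 := sq_le_sq' (abs_le.mp hω).1 (abs_le.mp hω).2
    rw [smul_eq_mul]
    nlinarith [mul_le_mul_of_nonneg_left h3 (sq_nonneg r)]
  have hexp : Integrable (fun ω => Real.exp (-(r * Z ω))) μ :=
    .of_bound (by fun_prop) _ (ae_norm_exp_neg_mul_le hr hZb)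
  filter_upwards [condExp_mono hexp ((integrable_const _).sub (hZ.smul r)) hquad,
    condExp_sub (integrable_const (1 + r ^ 2 * b ^ 2)) (hZ.smul r) m, condExp_smul r Z m, hZc]
    with ω hmono hsub hsmul hc
  rw [hsub, condExp_const hm] at hmono
  simp only [Pi.sub_apply, Pi.smul_apply, smul_eq_mul] at hmono hsmul
  rw [hsmul] at hmono
  simp only [Pi.one_apply]
  nlinarith [mul_le_mul_of_nonneg_left hc hr]

theorem supermartingale_exp_neg_mul_sub [IsFiniteMeasure μ] {G : Filtration ℕ m0}
    {Y : ℕ → Ω → ℝ} {b c r : ℝ} (hY : StronglyAdapted G Y) (hYi : ∀ t, Integrable (Y t) μ)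
    (hYb : ∀ t, ∀ᵐ ω ∂μ, |Y (t + 1) ω - Y t ω| ≤ b)
    (hYc : ∀ t, ∀ᵐ ω ∂μ, Y t ω + c ≤ μ[Y (t + 1) | G t] ω)
    (hr : 0 ≤ r) (hrb : r * b ≤ 1) (hrc : r * b ^ 2 ≤ c) :
    Supermartingale (fun t ω => Real.exp (-(r * (Y t ω - Y 0 ω)))) G μ := by
  set N : ℕ → Ω → ℝ := fun t ω => Real.exp (-(r * (Y t ω - Y 0 ω)))
  set W : ℕ → Ω → ℝ := fun t ω => Real.exp (-(r * (Y (t + 1) ω - Y t ω)))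
  have hNW : ∀ t, N (t + 1) = N t * W t := fun t => by
    funext ω
    simp only [N, W, Pi.mul_apply, ← Real.exp_add]
    ring_nf
  have hWm : ∀ t, AEStronglyMeasurable (W t) μ := fun t => by
    have := (hYi (t + 1)).aestronglyMeasurable.sub (hYi t).aestronglyMeasurable
    fun_prop
  have hWb : ∀ t, ∀ᵐ ω ∂μ, ‖W t ω‖ ≤ Real.exp (r * b) := fun t =>
    ae_norm_exp_neg_mul_le hr (hYb t)
  have hNa : StronglyAdapted G N := fun t =>
    Real.continuous_exp.comp_stronglyMeasurable
      ((((hY t).sub ((hY 0).mono (G.mono (Nat.zero_le t)))).const_mul r).neg)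
  have hNi : ∀ t, Integrable (N t) μ := by
    intro t
    induction t with
    | zero => simp [N]
    | succ t ih => rw [hNW]; exact ih.mul_bdd (hWm t) (hWb t)
  refine supermartingale_nat hNa hNi fun t => ?_
  have hdrift : ∀ᵐ ω ∂μ, c ≤ μ[Y (t + 1) - Y t | G t] ω := by
    filter_upwards [condExp_sub (hYi (t + 1)) (hYi t) (G t), hYc t] with ω h h'
    rw [h, Pi.sub_apply, condExp_of_stronglyMeasurable (G.le t) (hY t) (hYi t)]
    linarith
  have hWle := condExp_exp_neg_mul_le_one (G.le t) ((hYi (t + 1)).sub (hYi t)) (hYb t) hdrift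
    hr hrb hrc
  rw [hNW]
  filter_upwards [condExp_mul_of_stronglyMeasurable_left (hNa t) (hNW t ▸ hNi (t + 1))
    (Integrable.of_bound (hWm t) _ (hWb t)), hWle] with ω hmul hle
  rw [hmul, Pi.mul_apply]
  exact mul_le_of_le_one_right (Real.exp_nonneg _) hle

theorem Supermartingale.mul_measureReal_inter_le_setIntegral_of_le [IsFiniteMeasure μ]
    {G : Filtration ℕ m0} {N : ℕ → Ω → ℝ} (hN : Supermartingale N G μ)
    (hN0 : ∀ t, 0 ≤ᵐ[μ] N t) (ε : ℝ) {k n : ℕ} (hkn : k ≤ n) {E : Set Ω}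
    (hE : MeasurableSet[G k] E) :
    ε * μ.real (E ∩ {ω | ∃ t ∈ Set.Icc k n, ε ≤ N t ω}) ≤ ∫ ω in E, N k ω ∂μ := by
  set D := {ω | ∃ t ∈ Set.Icc k n, ε ≤ N t ω}
  set τ : Ω → WithTop ℕ := fun ω => (hittingBtwn N (Set.Ici ε) k n ω : ℕ)
  have hτ : IsStoppingTime G τ :=
    hN.stronglyAdapted.adapted.isStoppingTime_hittingBtwn measurableSet_Ici
  have hstop : Supermartingale (stoppedProcess N τ) G μ := by
    simpa using (hN.neg.stoppedProcess hτ).neg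
  have hDm : MeasurableSet D := by
    have hD : D = ⋃ t ∈ Set.Icc k n, {ω | ε ≤ N t ω} := by ext; simp [D]
    rw [hD]
    exact .biUnion (Set.to_countable _) fun t _ =>
      measurableSet_le measurable_const ((hN.stronglyAdapted t).mono (G.le t)).measurable
  have hind : D.indicator (fun _ => ε) ≤ᵐ[μ] stoppedProcess N τ n := by
    filter_upwards [ae_all_iff.2 hN0] with ω hω
    by_cases hωD : ω ∈ D
    · rw [Set.indicator_of_mem hωD, stoppedProcess_eq_of_ge]
      · exact hittingBtwn_mem_set hωD
      · exact WithTop.coe_le_coe.mpr (hittingBtwn_le ω)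
    · rw [Set.indicator_of_notMem hωD]
      exact hω _
  have hstart : stoppedProcess N τ k = N k := funext fun ω =>
    stoppedProcess_eq_of_le (WithTop.coe_le_coe.mpr (le_hittingBtwn hkn ω))
  calc ε * μ.real (E ∩ D) = ∫ ω in E, D.indicator (fun _ => ε) ω ∂μ := by
        rw [integral_indicator_const _ hDm, measureReal_restrict_apply hDm, Set.inter_comm,
          smul_eq_mul, mul_comm]
    _ ≤ ∫ ω in E, stoppedProcess N τ n ω ∂μ :=
        setIntegral_mono_ae ((integrable_const ε).indicator hDm).integrableOn
          (hstop.integrable n).integrableOn hind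
    _ ≤ ∫ ω in E, stoppedProcess N τ k ω ∂μ := hstop.setIntegral_le hkn hE
    _ = ∫ ω in E, N k ω ∂μ := by rw [hstart]

theorem Supermartingale.mul_measureReal_inter_le_setIntegral [IsFiniteMeasure μ]
    {G : Filtration ℕ m0} {N : ℕ → Ω → ℝ} (hN : Supermartingale N G μ)
    (hN0 : ∀ t, 0 ≤ᵐ[μ] N t) (ε : ℝ) {k : ℕ} {E : Set Ω} (hE : MeasurableSet[G k] E) :
    ε * μ.real (E ∩ {ω | ∃ t, k ≤ t ∧ ε ≤ N t ω}) ≤ ∫ ω in E, N k ω ∂μ := by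
  set D : ℕ → Set Ω := fun j => E ∩ {ω | ∃ t ∈ Set.Icc k (k + j), ε ≤ N t ω}
  have hD : Monotone D := fun i j hij ω ⟨hωE, t, ht, hεt⟩ =>
    ⟨hωE, t, ⟨ht.1, ht.2.trans (by omega)⟩, hεt⟩
  have hDU : ⋃ j, D j = E ∩ {ω | ∃ t, k ≤ t ∧ ε ≤ N t ω} := by
    ext ω
    simp only [D, Set.mem_iUnion, Set.mem_inter_iff, Set.mem_ofPred_eq, Set.mem_Icc]
    constructor
    · rintro ⟨j, hωE, t, ⟨hkt, -⟩, hεt⟩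
      exact ⟨hωE, t, hkt, hεt⟩
    · rintro ⟨hωE, t, hkt, hεt⟩
      exact ⟨t - k, hωE, t, ⟨hkt, by omega⟩, hεt⟩
  have hlim := ((ENNReal.tendsto_toReal (measure_ne_top μ _)).comp
    (tendsto_measure_iUnion_atTop (μ := μ) hD)).const_mul ε
  rw [hDU] at hlim
  exact le_of_tendsto' hlim fun j =>
    hN.mul_measureReal_inter_le_setIntegral_of_le hN0 ε (Nat.le_add_right k j) hE

theorem Supermartingale.mul_measureReal_le_measureReal_forall_lt_one [IsFiniteMeasure μ]
    {G : Filtration ℕ m0} {N : ℕ → Ω → ℝ} (hN : Supermartingale N G μ)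
    (hN0 : ∀ t, 0 ≤ᵐ[μ] N t) {k : ℕ} {E : Set Ω} (hE : MeasurableSet[G k] E) {e : ℝ}
    (hNe : ∀ ω ∈ E, N k ω ≤ e) :
    (1 - e) * μ.real E ≤ μ.real (E ∩ {ω | ∀ t, k ≤ t → N t ω < 1}) := by
  have hEm : MeasurableSet E := G.le k _ hE
  have hcover : μ.real E ≤ μ.real (E ∩ {ω | ∀ t, k ≤ t → N t ω < 1})
      + μ.real (E ∩ {ω | ∃ t, k ≤ t ∧ 1 ≤ N t ω}) := by
    refine (measureReal_mono fun ω hω => ?_).trans (measureReal_union_le _ _)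
    by_cases h : ∀ t, k ≤ t → N t ω < 1
    · exact Or.inl ⟨hω, h⟩
    · push Not at h
      exact Or.inr ⟨hω, h⟩
  have hhit : μ.real (E ∩ {ω | ∃ t, k ≤ t ∧ 1 ≤ N t ω}) ≤ e * μ.real E :=
    calc μ.real (E ∩ {ω | ∃ t, k ≤ t ∧ 1 ≤ N t ω})
        ≤ ∫ ω in E, N k ω ∂μ := by
          simpa using hN.mul_measureReal_inter_le_setIntegral hN0 1 hE
      _ ≤ ∫ _ in E, e ∂μ :=
          setIntegral_mono_on (hN.integrable k).integrableOn (integrable_const e).integrableOn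
            hEm hNe
      _ = e * μ.real E := by rw [setIntegral_const, smul_eq_mul, mul_comm]
  linarith

theorem ae_le_condExp_iff_forall_mul_measureReal_le_setIntegral [IsFiniteMeasure μ]
    (hm : m ≤ m0) {f : Ω → ℝ} (hf : Integrable f μ) (p : ℝ) :
    (∀ᵐ ω ∂μ, p ≤ μ[f | m] ω) ↔
      ∀ s, MeasurableSet[m] s → p * μ.real s ≤ ∫ ω in s, f ω ∂μ := by
  constructor
  · intro h s hs
    rw [← setIntegral_condExp hm hf hs, mul_comm, ← smul_eq_mul, ← setIntegral_const]
    exact setIntegral_mono_ae (integrable_const p).integrableOn integrable_condExp.integrableOn h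
  · intro h
    refine ae_le_of_ae_le_trim (hm := hm) (ae_le_of_forall_setIntegral_le (integrable_const p)
      (integrable_condExp.trim hm stronglyMeasurable_condExp) fun s hs _ => ?_)
    rw [← setIntegral_trim hm stronglyMeasurable_const hs,
      ← setIntegral_trim hm stronglyMeasurable_condExp hs, setIntegral_condExp hm hf hs,
      setIntegral_const, smul_eq_mul, mul_comm]
    exact h s hs

theorem ae_le_condExp_indicator_iff [IsFiniteMeasure μ] (hm : m ≤ m0) {s : Set Ω}
    (hs : MeasurableSet s) (p : ℝ) :
    (∀ᵐ ω ∂μ, p ≤ μ[s.indicator (fun _ => (1 : ℝ)) | m] ω) ↔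
      ∀ C, MeasurableSet[m] C → p * μ.real C ≤ μ.real (s ∩ C) := by
  rw [ae_le_condExp_iff_forall_mul_measureReal_le_setIntegral hm
    ((integrable_const _).indicator hs)]
  simp only [integral_indicator_const _ hs, measureReal_restrict_apply hs, smul_eq_mul, mul_one]

theorem exists_pos_mul_le_one_mul_sq_le {b c : ℝ} (hb : 0 < b) (hc : 0 < c) :
    ∃ r, 0 < r ∧ r * b ≤ 1 ∧ r * b ^ 2 ≤ c := by
  refine ⟨min (1 / b) (c / b ^ 2), lt_min (by positivity) (by positivity), ?_, ?_⟩
  · calc min (1 / b) (c / b ^ 2) * b ≤ 1 / b * b := by gcongr; exact min_le_left _ _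
      _ = 1 := one_div_mul_cancel hb.ne'
  · calc min (1 / b) (c / b ^ 2) * b ^ 2 ≤ c / b ^ 2 * b ^ 2 := by gcongr; exact min_le_right _ _
      _ = c := div_mul_cancel₀ c (by positivity)

theorem mul_measureReal_le_measureReal_forall_lt_of_le_increment [IsFiniteMeasure μ]
    {F : Filtration ℕ m0} {X : ℕ → Ω → ℝ} {b c r z : ℝ} (hX : StronglyAdapted F X)
    (hXi : ∀ t, Integrable (X t) μ) (hXb : ∀ t, ∀ᵐ ω ∂μ, |X (t + 1) ω - X t ω| ≤ b)
    (hXc : ∀ t, ∀ᵐ ω ∂μ, X t ω + c ≤ μ[X (t + 1) | F t] ω)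
    (hr : 0 ≤ r) (hrb : r * b ≤ 1) (hrc : r * b ^ 2 ≤ c) {k : ℕ} {E : Set Ω}
    (hE : MeasurableSet[F (k + 1)] E) (hEz : ∀ ω ∈ E, z ≤ X (k + 1) ω - X k ω) :
    (1 - Real.exp (-(r * z))) * μ.real E ≤ μ.real (E ∩ {ω | ∀ t, k < t → X k ω < X t ω}) := by
  have hN := supermartingale_exp_neg_mul_sub (μ := μ) (G := F.shift k) (Y := fun t => X (k + t))
    (fun t => hX (k + t)) (fun t => hXi (k + t)) (fun t => hXb (k + t)) (fun t => hXc (k + t))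
    hr hrb hrc
  simp only [add_zero] at hN
  refine (hN.mul_measureReal_le_measureReal_forall_lt_one
    (fun t => .of_forall fun ω => Real.exp_nonneg _) hE fun ω hω => ?_).trans
    (measureReal_mono fun ω ⟨hωE, hω⟩ => ⟨hωE, fun t hkt => ?_⟩)
  · rw [Real.exp_le_exp]
    nlinarith [hEz ω hω]
  · have := Real.exp_lt_one_iff.mp (hω (t - k) (by omega))
    rw [show k + (t - k) = t by omega] at this
    nlinarith

end MeasureTheory

theorem stmt_11_general {Ω : Type*} {m0 : MeasurableSpace Ω} (P : Measure Ω)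
    [IsProbabilityMeasure P] (F : Filtration ℕ m0)
    (X : ℕ → Ω → ℝ) (c b zstar l : ℝ)
    (hc : 0 < c) (hb : 0 < b) (hzstar : 0 < zstar) (hl : 0 < l)
    (hsub : Submartingale X F P)
    (hdrift : ∀ t, ∀ᵐ ω ∂P, X t ω + c ≤ (P[X (t + 1) | F t]) ω)
    (hbound : ∀ t, ∀ᵐ ω ∂P, |X (t + 1) ω - X t ω| ≤ b)
    (hpos : ∀ t, ∀ᵐ ω ∂P,
      l ≤ (P[Set.indicator {ω' | zstar ≤ X (t + 1) ω' - X t ω'}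
              (fun _ => (1 : ℝ)) | F t]) ω) :
    ∃ pstar : ℝ, 0 < pstar ∧ ∀ᵐ ω ∂P,
      zstar ≤ X 1 ω - X 0 ω →
        pstar ≤ (P[Set.indicator {ω' | ∀ t : ℕ, 2 ≤ t → X 1 ω' < X t ω'}
                    (fun _ => (1 : ℝ)) | F 1]) ω := by
  obtain ⟨r, hr, hrb, hrc⟩ := exists_pos_mul_le_one_mul_sq_le hb hc
  have he : Real.exp (-(r * zstar)) < 1 := Real.exp_lt_one_iff.mpr (by nlinarith)
  have hXm : ∀ t, Measurable (X t) := fun t => ((hsub.stronglyAdapted t).mono (F.le t)).measurable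
  set A := {ω' | zstar ≤ X (1 + 1) ω' - X 1 ω'}
  set S := {ω' | ∀ t : ℕ, 2 ≤ t → X 1 ω' < X t ω'}
  have hAm : MeasurableSet[F 2] A := measurableSet_le measurable_const
    ((hsub.stronglyAdapted 2).measurable.sub
      ((hsub.stronglyAdapted 1).mono (F.mono one_le_two)).measurable)
  have hSm : MeasurableSet S := by
    simp only [S, Set.ofPred_forall]
    exact .iInter fun t => .iInter fun _ => measurableSet_lt (hXm 1) (hXm t)
  refine ⟨l * (1 - Real.exp (-(r * zstar))), mul_pos hl (sub_pos.2 he), ?_⟩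
  have key : ∀ C, MeasurableSet[F 1] C →
      l * (1 - Real.exp (-(r * zstar))) * P.real C ≤ P.real (S ∩ C) := by
    intro C hC
    have hCA := (ae_le_condExp_indicator_iff (F.le 1) (F.le 2 _ hAm) l).1 (hpos 1) C hC
    calc l * (1 - Real.exp (-(r * zstar))) * P.real C
        = (1 - Real.exp (-(r * zstar))) * (l * P.real C) := by ring
      _ ≤ (1 - Real.exp (-(r * zstar))) * P.real (A ∩ C) :=
          mul_le_mul_of_nonneg_left hCA (sub_pos.2 he).le
      _ ≤ P.real (A ∩ C ∩ {ω | ∀ t, 1 < t → X 1 ω < X t ω}) :=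
          mul_measureReal_le_measureReal_forall_lt_of_le_increment hsub.stronglyAdapted
            hsub.integrable hbound hdrift hr.le hrb hrc (hAm.inter (F.mono one_le_two _ hC))
            fun ω hω => hω.1
      _ ≤ P.real (S ∩ C) := measureReal_mono fun ω ⟨⟨_, hωC⟩, hω⟩ => ⟨hω, hωC⟩
  filter_upwards [(ae_le_condExp_indicator_iff (F.le 1) hSm _).2 key] with ω hω _ using hω

/-- Key fixation step of Theorem 4.3: a submartingale with uniformly positive
drift, integer-valued bounded increments, and two-sided conditional increment
probabilities admits a constant p* > 0 such that, conditionally on F_1, on the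
event that the first increment is at least z*, the process stays strictly above
its initial level forever with conditional probability at least p*. -/
theorem stmt_11 {Ω : Type*} {m0 : MeasurableSpace Ω} (P : Measure Ω)
    [IsProbabilityMeasure P] (F : Filtration ℕ m0)
    (X : ℕ → Ω → ℝ) (c b zstar l : ℝ)
    (hc : 0 < c) (hb : 0 < b) (hzstar : 0 < zstar) (hl : 0 < l) (hl1 : l < 1)
    (hsub : Submartingale X F P)
    (hdrift : ∀ t, ∀ᵐ ω ∂P, X t ω + c ≤ (P[X (t + 1) | F t]) ω)
    (hint : ∀ t, ∀ᵐ ω ∂P, ∃ k : ℤ, X (t + 1) ω - X t ω = (k : ℝ))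
    (hbound : ∀ t, ∀ᵐ ω ∂P, |X (t + 1) ω - X t ω| ≤ b)
    (hpos : ∀ t, ∀ᵐ ω ∂P,
      l ≤ (P[Set.indicator {ω' | zstar ≤ X (t + 1) ω' - X t ω'}
              (fun _ => (1 : ℝ)) | F t]) ω)
    (hneg : ∀ t, ∀ᵐ ω ∂P,
      l ≤ (P[Set.indicator {ω' | X (t + 1) ω' - X t ω' ≤ -zstar}
              (fun _ => (1 : ℝ)) | F t]) ω) :
    ∃ pstar : ℝ, 0 < pstar ∧ ∀ᵐ ω ∂P,
      zstar ≤ X 1 ω - X 0 ω →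
        pstar ≤ (P[Set.indicator {ω' | ∀ t : ℕ, 2 ≤ t → X 1 ω' < X t ω'}
                    (fun _ => (1 : ℝ)) | F 1]) ω :=
  stmt_11_general P F X c b zstar l hc hb hzstar hl hsub hdrift hbound hpos
end

section
/- Let (U_i(t))_{i=1}^N be processes with uniformly bounded increments such that, for each i, E[U_i(t+1) − U_i(t) | F_t] = (M/N)f_i(U_i(t)) − (1 − M/N)g_i(U_i(t)) where f_i is nondecreasing with limit f⁺ at +∞ and g_i is nonincreasing with limit g⁻ at +∞, and suppose U_i(t) → +∞ a.s. for all i. Then for each i, (U_i(t) − U_i(0))/t → (M/N)f⁺ − ((N−M)/N)g⁻ almost surely. -/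
/-!
Doob-decompose `V n = U n - U 0` into its martingale part and its predictable part
`∑_{k<n} E[U (k+1) - U k | F k]`. The predictable part divided by `n` is a Cesàro mean of
the conditional drifts, which converge a.s. to `(M/N) f⁺ - (1 - M/N) g⁻` because `U t → ∞`.
The martingale part has bounded increments, so its transform `∑ dₖ / (k+1)` has square-summable
orthogonal increments, is bounded in `L²` and converges a.s.; Kronecker's lemma then gives
that the martingale part is `o(n)` a.s.
-/

open MeasureTheory Filter Finset Topology
open scoped ENNReal

theorem sum_range_eq_mul_sum_inv_succ_mul_sub (a : ℕ → ℝ) (n : ℕ) :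
    ∑ k ∈ range n, a k = n * ∑ k ∈ range n, (k + 1 : ℝ)⁻¹ * a k
      - ∑ j ∈ range n, ∑ k ∈ range j, (k + 1 : ℝ)⁻¹ * a k := by
  induction n with
  | zero => simp
  | succ n ih =>
    rw [sum_range_succ, ih, sum_range_succ (fun j => ∑ k ∈ range j, _),
      sum_range_succ (fun k => (k + 1 : ℝ)⁻¹ * a k)]
    push_cast
    field_simp
    ring

/-- Kronecker's lemma. -/
theorem tendsto_sum_range_div_atTop_zero {a : ℕ → ℝ} {l : ℝ}
    (h : Tendsto (fun n => ∑ k ∈ range n, (k + 1 : ℝ)⁻¹ * a k) atTop (𝓝 l)) :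
    Tendsto (fun n : ℕ => (∑ k ∈ range n, a k) / n) atTop (𝓝 0) := by
  have h_diff := h.sub h.cesaro
  rw [sub_self] at h_diff
  refine h_diff.congr' ?_
  filter_upwards [eventually_ne_atTop 0] with n hn
  rw [sum_range_eq_mul_sum_inv_succ_mul_sub a n, sub_div,
    mul_div_cancel_left₀ _ (by exact_mod_cast hn), div_eq_inv_mul]

namespace MeasureTheory

variable {Ω : Type*} {m0 : MeasurableSpace Ω} {P : Measure Ω} {F : Filtration ℕ m0}
  {M : ℕ → Ω → ℝ}

theorem Martingale.condExp_succ_sub_ae_eq_zero (hM : Martingale M F P) (n : ℕ) :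
    P[M (n + 1) - M n | F n] =ᵐ[P] 0 := by
  filter_upwards [condExp_sub (hM.integrable (n + 1)) (hM.integrable n) (F n),
    hM.condExp_ae_eq n.le_succ, hM.condExp_ae_eq (le_refl n)] with ω h h₁ h₀
  simp [h, h₁, h₀]

theorem memLp_of_abs_sub_le [IsFiniteMeasure P] {p : ℝ≥0∞}
    (hmeas : ∀ n, AEStronglyMeasurable (M n) P) (h0 : MemLp (M 0) p P) {c : ℕ → ℝ}
    (hc : ∀ n, ∀ᵐ ω ∂P, |M (n + 1) ω - M n ω| ≤ c n) (n : ℕ) : MemLp (M n) p P := by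
  induction n with
  | zero => exact h0
  | succ n ih =>
    have hd : MemLp (M (n + 1) - M n) p P :=
      MemLp.of_bound ((hmeas _).sub (hmeas n)) (c n) (hc n)
    simpa using ih.add hd

theorem Martingale.integral_mul_sub_eq_zero [IsFiniteMeasure P] (hM : Martingale M F P)
    (h2 : ∀ n, MemLp (M n) 2 P) (n : ℕ) :
    ∫ ω, M n ω * (M (n + 1) ω - M n ω) ∂P = 0 := by
  have hd : MemLp (M (n + 1) - M n) 2 P := (h2 _).sub (h2 n)
  have hcond : P[M n * (M (n + 1) - M n) | F n] =ᵐ[P] 0 := by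
    filter_upwards [condExp_mul_of_stronglyMeasurable_left (hM.stronglyAdapted n)
      ((h2 n).integrable_mul hd) (hd.integrable one_le_two),
      hM.condExp_succ_sub_ae_eq_zero n] with ω h h₀
    simp [h, h₀]
  calc ∫ ω, M n ω * (M (n + 1) ω - M n ω) ∂P = ∫ ω, P[M n * (M (n + 1) - M n) | F n] ω ∂P :=
        (integral_condExp (F.le n)).symm
    _ = 0 := by simp [integral_congr_ae hcond]

theorem Martingale.integral_sq_succ [IsFiniteMeasure P] (hM : Martingale M F P)
    (h2 : ∀ n, MemLp (M n) 2 P) (n : ℕ) :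
    ∫ ω, M (n + 1) ω ^ 2 ∂P = ∫ ω, M n ω ^ 2 ∂P + ∫ ω, (M (n + 1) ω - M n ω) ^ 2 ∂P := by
  have hd : MemLp (M (n + 1) - M n) 2 P := (h2 _).sub (h2 n)
  have hcross : Integrable (fun ω => 2 * (M n ω * (M (n + 1) ω - M n ω))) P :=
    ((h2 n).integrable_mul hd).const_mul 2
  have hsq : Integrable (fun ω => M n ω ^ 2) P := (h2 n).integrable_sq
  have hd2 : Integrable (fun ω => (M (n + 1) ω - M n ω) ^ 2) P := hd.integrable_sq
  calc ∫ ω, M (n + 1) ω ^ 2 ∂P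
      = ∫ ω, (M n ω ^ 2 + 2 * (M n ω * (M (n + 1) ω - M n ω))) + (M (n + 1) ω - M n ω) ^ 2 ∂P :=
        integral_congr_ae (ae_of_all _ fun ω => by ring)
    _ = _ := by
      have hsum : Integrable (fun ω => M n ω ^ 2 + 2 * (M n ω * (M (n + 1) ω - M n ω))) P :=
        hsq.add hcross
      rw [integral_add hsum hd2, integral_add hsq hcross, integral_const_mul,
        hM.integral_mul_sub_eq_zero h2, mul_zero, add_zero]

theorem Martingale.integral_sq_le_add_sum [IsProbabilityMeasure P] (hM : Martingale M F P)
    (h0 : MemLp (M 0) 2 P) {c : ℕ → ℝ} (hc : ∀ n, ∀ᵐ ω ∂P, |M (n + 1) ω - M n ω| ≤ c n)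
    (n : ℕ) : ∫ ω, M n ω ^ 2 ∂P ≤ ∫ ω, M 0 ω ^ 2 ∂P + ∑ k ∈ range n, c k ^ 2 := by
  have h2 := memLp_of_abs_sub_le (fun n => (hM.integrable n).aestronglyMeasurable) h0 hc
  induction n with
  | zero => simp
  | succ n ih =>
    have hd : ∫ ω, (M (n + 1) ω - M n ω) ^ 2 ∂P ≤ c n ^ 2 := by
      refine (integral_mono_ae ((h2 _).sub (h2 n)).integrable_sq
        (integrable_const (c n ^ 2)) ?_).trans_eq (by simp)
      filter_upwards [hc n] with ω hω
      exact (sq_abs _).symm.le.trans (pow_le_pow_left₀ (abs_nonneg _) hω 2)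
    rw [hM.integral_sq_succ h2, sum_range_succ]
    linarith

theorem Martingale.ae_exists_tendsto_of_summable_sq [IsProbabilityMeasure P]
    (hM : Martingale M F P) (h0 : MemLp (M 0) 2 P) {c : ℕ → ℝ}
    (hc_sum : Summable fun n => c n ^ 2) (hc : ∀ n, ∀ᵐ ω ∂P, |M (n + 1) ω - M n ω| ≤ c n) :
    ∀ᵐ ω ∂P, ∃ l, Tendsto (fun n => M n ω) atTop (𝓝 l) := by
  refine hM.submartingale.exists_ae_tendsto_of_bdd
    (R := (1 + ∫ ω, M 0 ω ^ 2 ∂P + ∑' k, c k ^ 2).toNNReal) fun n => ?_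
  have h2 := memLp_of_abs_sub_le (fun n => (hM.integrable n).aestronglyMeasurable) h0 hc n
  have hL1 : ∫ ω, ‖M n ω‖ ∂P ≤ 1 + ∫ ω, M 0 ω ^ 2 ∂P + ∑' k, c k ^ 2 :=
    calc ∫ ω, ‖M n ω‖ ∂P ≤ ∫ ω, 1 + M n ω ^ 2 ∂P := by
          refine integral_mono (hM.integrable n).norm ((integrable_const 1).add h2.integrable_sq)
            fun ω => ?_
          nlinarith [sq_nonneg (|M n ω| - 1), sq_abs (M n ω), Real.norm_eq_abs (M n ω)]
      _ = 1 + ∫ ω, M n ω ^ 2 ∂P := by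
          rw [integral_add (integrable_const 1) h2.integrable_sq]
          simp
      _ ≤ 1 + ∫ ω, M 0 ω ^ 2 ∂P + ∑' k, c k ^ 2 := by
          have := (hM.integral_sq_le_add_sum h0 hc n).trans
            (add_le_add_right (hc_sum.sum_le_tsum _ fun k _ => sq_nonneg (c k)) _)
          linarith
  rw [eLpNorm_one_eq_lintegral_enorm, ← ofReal_integral_norm_eq_lintegral_enorm (hM.integrable n)]
  exact ENNReal.ofReal_le_ofReal hL1

theorem Martingale.sum_range_mul_sub [IsFiniteMeasure P] (hM : Martingale M F P) (a : ℕ → ℝ) :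
    Martingale (fun n ω => ∑ k ∈ range n, a k * (M (k + 1) ω - M k ω)) F P := by
  refine martingale_of_condExp_sub_eq_zero_nat (fun n => ?_) (fun n => ?_) fun n => ?_
  · refine Finset.stronglyMeasurable_fun_sum _ fun k hk => stronglyMeasurable_const.mul ?_
    have hk : k + 1 ≤ n := mem_range.1 hk
    exact ((hM.stronglyAdapted _).mono (F.mono hk)).sub
      ((hM.stronglyAdapted k).mono (F.mono (by omega)))
  · exact integrable_finsetSum _ fun k _ => ((hM.integrable _).sub (hM.integrable k)).const_mul _
  · have hinc : (fun ω => ∑ k ∈ range (n + 1), a k * (M (k + 1) ω - M k ω))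
        - (fun ω => ∑ k ∈ range n, a k * (M (k + 1) ω - M k ω)) = a n • (M (n + 1) - M n) := by
      funext ω
      simp [sum_range_succ]
    rw [hinc]
    filter_upwards [condExp_smul (a n) (M (n + 1) - M n) (F n),
      hM.condExp_succ_sub_ae_eq_zero n] with ω h h₀
    simp [h, h₀]

theorem Martingale.ae_tendsto_div_atTop_zero [IsProbabilityMeasure P] (hM : Martingale M F P)
    {R : ℝ} (hR : ∀ n, ∀ᵐ ω ∂P, |M (n + 1) ω - M n ω| ≤ R) :
    ∀ᵐ ω ∂P, Tendsto (fun n : ℕ => M n ω / n) atTop (𝓝 0) := by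
  have hW := hM.sum_range_mul_sub fun k => (k + 1 : ℝ)⁻¹
  have hW0 : MemLp (fun ω => ∑ k ∈ range 0, (k + 1 : ℝ)⁻¹ * (M (k + 1) ω - M k ω)) 2 P := by
    simp
  have hWinc : ∀ n, ∀ᵐ ω ∂P, |∑ k ∈ range (n + 1), (k + 1 : ℝ)⁻¹ * (M (k + 1) ω - M k ω)
      - ∑ k ∈ range n, (k + 1 : ℝ)⁻¹ * (M (k + 1) ω - M k ω)| ≤ (n + 1 : ℝ)⁻¹ * R := by
    intro n
    filter_upwards [hR n] with ω hω
    rw [sum_range_succ_sub_sum, abs_mul, abs_of_pos (by positivity)]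
    gcongr
  have hsum : Summable fun n : ℕ => ((n + 1 : ℝ)⁻¹ * R) ^ 2 := by
    simp_rw [mul_pow, inv_pow]
    refine Summable.mul_right _ ?_
    exact_mod_cast (summable_nat_add_iff 1).2 (Real.summable_nat_pow_inv.2 one_lt_two)
  filter_upwards [hW.ae_exists_tendsto_of_summable_sq hW0 hsum hWinc] with ω ⟨l, hl⟩
  have hKr := tendsto_sum_range_div_atTop_zero hl
  simp_rw [sum_range_sub (fun k => M k ω)] at hKr
  simpa [sub_div] using hKr.add (tendsto_const_div_atTop_nhds_zero_nat (M 0 ω))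

end MeasureTheory

theorem ae_tendsto_sub_div_of_ae_tendsto_condExp {Ω : Type*} {m0 : MeasurableSpace Ω}
    {P : Measure Ω} [IsProbabilityMeasure P] {F : Filtration ℕ m0} {U : ℕ → Ω → ℝ}
    (hU : Adapted F U) {b : ℝ} (hb : ∀ t, ∀ᵐ ω ∂P, |U (t + 1) ω - U t ω| ≤ b) {L : ℝ}
    (hdrift : ∀ᵐ ω ∂P, Tendsto (fun t => P[U (t + 1) - U t | F t] ω) atTop (𝓝 L)) :
    ∀ᵐ ω ∂P, Tendsto (fun n : ℕ => (U n ω - U 0 ω) / n) atTop (𝓝 L) := by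
  set V : ℕ → Ω → ℝ := fun n => U n - U 0
  have hbV : ∀ n, ∀ᵐ ω ∂P, |V (n + 1) ω - V n ω| ≤ b := fun n =>
    (hb n).mono fun ω h => by simpa [V] using h
  have hVadapt : StronglyAdapted F V := fun n =>
    (hU.stronglyAdapted n).sub ((hU.stronglyAdapted 0).mono (F.mono n.zero_le))
  have hVint : ∀ n, Integrable (V n) P := fun n => memLp_one_iff_integrable.1 <|
    memLp_of_abs_sub_le (fun n => ((hVadapt n).mono (F.le n)).aestronglyMeasurable)
      (by simp [V]) hbV n
  have hbdd := martingalePart_bdd_difference (μ := P) F <|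
    ae_all_iff.2 fun n => (hbV n).mono fun ω h => by rwa [Real.norm_eq_abs]
  have hmart := (martingale_martingalePart hVadapt hVint).ae_tendsto_div_atTop_zero
    (R := 2 * b) fun n => (ae_all_iff.1 hbdd n).mono fun ω h => by simpa using h
  filter_upwards [hmart, hdrift] with ω hm hd
  refine (zero_add L ▸ hm.add hd.cesaro).congr fun n => ?_
  simp only [martingalePart, predictablePart, Pi.sub_apply, Finset.sum_apply, V,
    sub_sub_sub_cancel_right]
  ring

theorem stmt_14_general {Ω : Type*} {m0 : MeasurableSpace Ω} (P : Measure Ω)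
    [IsProbabilityMeasure P] (F : Filtration ℕ m0)
    (N M : ℕ)
    (U : Fin N → ℕ → Ω → ℝ) (f g : Fin N → ℝ → ℝ) (fp gm b : ℝ)
    (hadapt : ∀ i, Adapted F (U i))
    (hbound : ∀ i t, ∀ᵐ ω ∂P, |U i (t + 1) ω - U i t ω| ≤ b)
    (hflim : ∀ i, Tendsto (f i) atTop (nhds fp))
    (hglim : ∀ i, Tendsto (g i) atTop (nhds gm))
    (hdrift : ∀ i t, ∀ᵐ ω ∂P,
      (P[fun ω' => U i (t + 1) ω' - U i t ω' | F t]) ω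
        = ((M : ℝ) / N) * f i (U i t ω) - (1 - (M : ℝ) / N) * g i (U i t ω))
    (hinf : ∀ᵐ ω ∂P, ∀ i, Tendsto (fun t => U i t ω) atTop atTop) :
    ∀ᵐ ω ∂P, ∀ i,
      Tendsto (fun t : ℕ => (U i t ω - U i 0 ω) / t) atTop
        (nhds (((M : ℝ) / N) * fp - (((N : ℝ) - M) / N) * gm)) := by
  refine ae_all_iff.2 fun i => ?_
  have hN : (N : ℝ) ≠ 0 := Nat.cast_ne_zero.2 i.pos.ne'
  rw [sub_div, div_self hN]
  refine ae_tendsto_sub_div_of_ae_tendsto_condExp (hadapt i) (hbound i) ?_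
  filter_upwards [ae_all_iff.2 (hdrift i), hinf] with ω hω hω_top
  refine Tendsto.congr (fun t => (hω t).symm) ?_
  exact (((hflim i).comp (hω_top i)).const_mul _).sub (((hglim i).comp (hω_top i)).const_mul _)

/-- Convergence step of Theorem 4.5: if each individual's conditional drift is
(M/N)f_i(U_i(t)) − (1 − M/N)g_i(U_i(t)) with f_i nondecreasing tending to f⁺,
g_i nonincreasing tending to g⁻, and U_i(t) → ∞ a.s., then the growth rate
(U_i(t) − U_i(0))/t converges a.s. to (M/N)f⁺ − ((N−M)/N)g⁻ for every i. -/
theorem stmt_14 {Ω : Type*} {m0 : MeasurableSpace Ω} (P : Measure Ω)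
    [IsProbabilityMeasure P] (F : Filtration ℕ m0)
    (N M : ℕ) (hN : 0 < N) (hM : 0 < M) (hMN : M ≤ N)
    (U : Fin N → ℕ → Ω → ℝ) (f g : Fin N → ℝ → ℝ) (fp gm b : ℝ) (hb : 0 < b)
    (hadapt : ∀ i, Adapted F (U i))
    (hbound : ∀ i t, ∀ᵐ ω ∂P, |U i (t + 1) ω - U i t ω| ≤ b)
    (hfmono : ∀ i, Monotone (f i)) (hgmono : ∀ i, Antitone (g i))
    (hflim : ∀ i, Tendsto (f i) atTop (nhds fp))
    (hglim : ∀ i, Tendsto (g i) atTop (nhds gm))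
    (hdrift : ∀ i t, ∀ᵐ ω ∂P,
      (P[fun ω' => U i (t + 1) ω' - U i t ω' | F t]) ω
        = ((M : ℝ) / N) * f i (U i t ω) - (1 - (M : ℝ) / N) * g i (U i t ω))
    (hinf : ∀ᵐ ω ∂P, ∀ i, Tendsto (fun t => U i t ω) atTop atTop) :
    ∀ᵐ ω ∂P, ∀ i,
      Tendsto (fun t : ℕ => (U i t ω - U i 0 ω) / t) atTop
        (nhds (((M : ℝ) / N) * fp - (((N : ℝ) - M) / N) * gm)) :=
  stmt_14_general P F N M U f g fp gm b hadapt hbound hflim hglim hdrift hinf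
end

section
/- Define w_i = (1/(f_i⁻ + g_i⁺)) · (Σ_j 1/(f_j⁻ + g_j⁺))⁻¹ and Ū(t) = Σ_i w_i U_i(t). If the allocation a(t) ∈ {0,1}^N satisfies Σ_i a_i(t) = M and E[U_i(t+1) − U_i(t) | F_t] = a_i(t) f_i(U_i(t)) − (1 − a_i(t)) g_i(U_i(t)) with f_i(x) ≥ f_i⁻ > 0 and g_i(x) ≤ g_i⁺ for all x, then E[Ū(t+1) − Ū(t) | F_t] ≥ ζ̄((f_1⁻,…,f_N⁻),(g_1⁺,…,g_N⁺)). -/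
/-!
By linearity of conditional expectation the drift of `Ū` is the weighted sum of the individual
drifts `aᵢ fᵢ - (1 - aᵢ) gᵢ`, and each is at least `aᵢ fᵢ⁻ - (1 - aᵢ) gᵢ⁺` since `0 ≤ aᵢ ≤ 1`.
The weight `1 / (fᵢ⁻ + gᵢ⁺)` turns this lower bound into `aᵢ - gᵢ⁺ / (fᵢ⁻ + gᵢ⁺)`, so the sum
depends on the allocation only through `∑ aᵢ = M`.
-/

open MeasureTheory Finset

theorem condExp_sum_const_mul {α ι : Type*} {m m0 : MeasurableSpace α}
    {μ : Measure α} (s : Finset ι) (c : ι → ℝ) {f : ι → α → ℝ}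
    (hf : ∀ i ∈ s, Integrable (f i) μ) :
    μ[fun x => ∑ i ∈ s, c i * f i x | m]
      =ᵐ[μ] fun x => ∑ i ∈ s, c i * μ[f i | m] x := by
  have hsum : (fun x => ∑ i ∈ s, c i * f i x) = ∑ i ∈ s, c i • f i := by
    ext x; simp
  rw [hsum]
  refine (condExp_finsetSum (fun i hi => (hf i hi).smul (c i)) m).trans ?_
  refine (eventuallyEq_sum fun i _ => condExp_smul (c i) (f i) m).trans ?_
  exact Filter.Eventually.of_forall fun x => by simp

theorem mul_sub_one_sub_mul_le_mul_sub_one_sub_mul {a x x' y y' : ℝ}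
    (ha₀ : 0 ≤ a) (ha₁ : a ≤ 1) (hx : x ≤ x') (hy : y' ≤ y) :
    a * x - (1 - a) * y ≤ a * x' - (1 - a) * y' :=
  sub_le_sub (mul_le_mul_of_nonneg_left hx ha₀)
    (mul_le_mul_of_nonneg_left hy (sub_nonneg.2 ha₁))

theorem sum_one_div_add_mul_mul_sub_one_sub_mul {ι : Type*} (s : Finset ι) (a x y : ι → ℝ)
    (hxy : ∀ i ∈ s, x i + y i ≠ 0) (c : ℝ) :
    ∑ i ∈ s, 1 / (x i + y i) * c * (a i * x i - (1 - a i) * y i)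
      = (∑ i ∈ s, a i - ∑ i ∈ s, y i / (x i + y i)) * c := by
  rw [← sum_sub_distrib, sum_mul]
  refine sum_congr rfl fun i hi => ?_
  field_simp [hxy i hi]
  ring

theorem stmt_15_general {Ω : Type*} {m0 : MeasurableSpace Ω} (P : Measure Ω)
    (F : Filtration ℕ m0)
    (N M : ℕ)
    (U : Fin N → ℕ → Ω → ℝ) (a : Fin N → ℕ → Ω → ℝ)
    (f g : Fin N → ℝ → ℝ) (fminus gplus : Fin N → ℝ)
    (hfm : ∀ i, 0 < fminus i) (hgp : ∀ i, 0 < gplus i)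
    (hflb : ∀ i x, fminus i ≤ f i x) (hgub : ∀ i x, g i x ≤ gplus i)
    (ha01 : ∀ i t ω, a i t ω = 0 ∨ a i t ω = 1)
    (hasum : ∀ t ω, ∑ i, a i t ω = (M : ℝ))
    (hint : ∀ i t, Integrable (fun ω => U i (t + 1) ω - U i t ω) P)
    (hdrift : ∀ i t, ∀ᵐ ω ∂P,
      (P[fun ω' => U i (t + 1) ω' - U i t ω' | F t]) ω
        = a i t ω * f i (U i t ω) - (1 - a i t ω) * g i (U i t ω)) :
    ∀ t, ∀ᵐ ω ∂P,
      ((M : ℝ) - ∑ i, gplus i / (fminus i + gplus i))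
          * (∑ j, 1 / (fminus j + gplus j))⁻¹
        ≤ (P[fun ω' =>
              (∑ i, (1 / (fminus i + gplus i))
                  * (∑ j, 1 / (fminus j + gplus j))⁻¹ * U i (t + 1) ω')
              - (∑ i, (1 / (fminus i + gplus i))
                  * (∑ j, 1 / (fminus j + gplus j))⁻¹ * U i t ω') | F t]) ω := by
  intro t
  set S := ∑ j, 1 / (fminus j + gplus j)
  have hpos i : 0 < fminus i + gplus i := add_pos (hfm i) (hgp i)
  have hw i : 0 ≤ 1 / (fminus i + gplus i) * S⁻¹ :=
    mul_nonneg (one_div_pos.2 (hpos i)).le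
      (inv_nonneg.2 (sum_nonneg fun j _ => (one_div_pos.2 (hpos j)).le))
  have ha i ω : 0 ≤ a i t ω ∧ a i t ω ≤ 1 := by rcases ha01 i t ω with h | h <;> simp [h]
  have hΔ : (fun ω => ∑ i, 1 / (fminus i + gplus i) * S⁻¹ * U i (t + 1) ω
        - ∑ i, 1 / (fminus i + gplus i) * S⁻¹ * U i t ω)
      = fun ω => ∑ i, 1 / (fminus i + gplus i) * S⁻¹ * (U i (t + 1) ω - U i t ω) := by
    funext ω; simp only [mul_sub, sum_sub_distrib]
  rw [hΔ]
  filter_upwards [condExp_sum_const_mul univ _ fun i _ => hint i t,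
    ae_all_iff.2 fun i => hdrift i t] with ω hce hdr
  rw [hce, ← hasum t ω,
    ← sum_one_div_add_mul_mul_sub_one_sub_mul univ _ _ _ fun i _ => (hpos i).ne']
  refine sum_le_sum fun i _ => mul_le_mul_of_nonneg_left ?_ (hw i)
  rw [hdr i]
  exact mul_sub_one_sub_mul_le_mul_sub_one_sub_mul (ha i ω).1 (ha i ω).2 (hflb i _) (hgub i _)

/-- Lower drift bound for the weighted welfare Ū (ineq. (10)–(11)): regardless
of which M individuals are treated, E[Ū(t+1) − Ū(t) | F_t] ≥ ζ̄((f_i⁻),(g_i⁺)). -/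
theorem stmt_15 {Ω : Type*} {m0 : MeasurableSpace Ω} (P : Measure Ω)
    [IsProbabilityMeasure P] (F : Filtration ℕ m0)
    (N M : ℕ) (hN : 0 < N) (hM : 0 < M) (hMN : M ≤ N)
    (U : Fin N → ℕ → Ω → ℝ) (a : Fin N → ℕ → Ω → ℝ)
    (f g : Fin N → ℝ → ℝ) (fminus gplus : Fin N → ℝ)
    (hfm : ∀ i, 0 < fminus i) (hgp : ∀ i, 0 < gplus i)
    (hflb : ∀ i x, fminus i ≤ f i x) (hgub : ∀ i x, g i x ≤ gplus i)
    (hgpos : ∀ i x, 0 < g i x)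
    (ha01 : ∀ i t ω, a i t ω = 0 ∨ a i t ω = 1)
    (hasum : ∀ t ω, ∑ i, a i t ω = (M : ℝ))
    (hint : ∀ i t, Integrable (fun ω => U i (t + 1) ω - U i t ω) P)
    (hdrift : ∀ i t, ∀ᵐ ω ∂P,
      (P[fun ω' => U i (t + 1) ω' - U i t ω' | F t]) ω
        = a i t ω * f i (U i t ω) - (1 - a i t ω) * g i (U i t ω)) :
    ∀ t, ∀ᵐ ω ∂P,
      ((M : ℝ) - ∑ i, gplus i / (fminus i + gplus i))
          * (∑ j, 1 / (fminus j + gplus j))⁻¹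
        ≤ (P[fun ω' =>
              (∑ i, (1 / (fminus i + gplus i))
                  * (∑ j, 1 / (fminus j + gplus j))⁻¹ * U i (t + 1) ω')
              - (∑ i, (1 / (fminus i + gplus i))
                  * (∑ j, 1 / (fminus j + gplus j))⁻¹ * U i t ω') | F t]) ω :=
  stmt_15_general P F N M U a f g fminus gplus hfm hgp hflb hgub ha01 hasum hint hdrift
end

section
/- Define w̃_i = (1/(f_i⁺ + g_i⁻)) · (Σ_j 1/(f_j⁺ + g_j⁻))⁻¹ and Ũ(t) = Σ_i w̃_i U_i(t). Under the same intervention model with f_i(x) ≤ f_i⁺ and g_i(x) ≥ g_i⁻ > 0 for all x and Σ_i a_i(t) = M with a_i(t) ∈ {0,1}, the weighted welfare satisfies E[Ũ(t+1) − Ũ(t) | F_t] ≤ ζ̄((f_1⁺,…,f_N⁺),(g_1⁻,…,g_N⁻)), regardless of the policy. -/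
open MeasureTheory

/-! Conditional expectation is linear, so the drift of Ũ is the w̃-weighted sum of the individual
drifts `a_i f_i(U_i) - (1 - a_i) g_i(U_i)`. Since `a_i ∈ {0, 1}`, each drift is at most
`a_i f_i⁺ - (1 - a_i) g_i⁻`, and with `c_i = f_i⁺ + g_i⁻` this extreme drift is `a_i c_i - g_i⁻`.
Dividing by `c_i` is exactly what the weights do, so the weighted sum collapses to
`(Σ a_i - Σ g_i⁻ / c_i) (Σ 1 / c_j)⁻¹`, and `Σ a_i = M`. -/

theorem condExp_sum_mul {α ι : Type*} {m m0 : MeasurableSpace α} {μ : Measure α}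
    {s : Finset ι} (c : ι → ℝ) {X : ι → α → ℝ} (hX : ∀ i ∈ s, Integrable (X i) μ) :
    μ[fun ω => ∑ i ∈ s, c i * X i ω | m] =ᵐ[μ] fun ω => ∑ i ∈ s, c i * μ[X i | m] ω := by
  have hsmul : (fun ω => ∑ i ∈ s, c i * X i ω) = ∑ i ∈ s, c i • X i := by
    ext ω
    simp only [Finset.sum_apply, Pi.smul_apply, smul_eq_mul]
  have hterms : ∀ᵐ ω ∂μ, ∀ i ∈ s, μ[c i • X i | m] ω = c i * μ[X i | m] ω :=
    (Filter.eventually_all_finset s).mpr fun i _ => condExp_smul (c i) (X i) m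
  rw [hsmul]
  filter_upwards [condExp_finsetSum (fun i hi => (hX i hi).smul (c i)) m, hterms]
    with ω hsum hω
  rw [hsum, Finset.sum_apply]
  exact Finset.sum_congr rfl hω

theorem mul_sub_one_sub_mul_le_of_eq_zero_or_eq_one {a f f' g g' : ℝ} (ha : a = 0 ∨ a = 1)
    (hf : f ≤ f') (hg : g' ≤ g) :
    a * f - (1 - a) * g ≤ a * f' - (1 - a) * g' := by
  rcases ha with rfl | rfl <;> linarith

theorem sum_inv_mul_inv_sum_mul_drift_eq {ι : Type*} (s : Finset ι) (a fplus gminus : ι → ℝ)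
    (hfg : ∀ i ∈ s, fplus i + gminus i ≠ 0) :
    ∑ i ∈ s, 1 / (fplus i + gminus i) * (∑ j ∈ s, 1 / (fplus j + gminus j))⁻¹
        * (a i * fplus i - (1 - a i) * gminus i)
      = ((∑ i ∈ s, a i) - ∑ i ∈ s, gminus i / (fplus i + gminus i))
        * (∑ j ∈ s, 1 / (fplus j + gminus j))⁻¹ := by
  rw [← Finset.sum_sub_distrib, Finset.sum_mul]
  refine Finset.sum_congr rfl fun i hi => ?_
  field_simp [hfg i hi]
  ring

theorem stmt_16_general {Ω : Type*} {m0 : MeasurableSpace Ω} (P : Measure Ω)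
    (F : Filtration ℕ m0)
    (N M : ℕ)
    (U : Fin N → ℕ → Ω → ℝ) (a : Fin N → ℕ → Ω → ℝ)
    (f g : Fin N → ℝ → ℝ) (fplus gminus : Fin N → ℝ)
    (hfp : ∀ i, 0 < fplus i) (hgm : ∀ i, 0 < gminus i)
    (hfub : ∀ i x, f i x ≤ fplus i) (hglb : ∀ i x, gminus i ≤ g i x)
    (ha01 : ∀ i t ω, a i t ω = 0 ∨ a i t ω = 1)
    (hasum : ∀ t ω, ∑ i, a i t ω = (M : ℝ))
    (hint : ∀ i t, Integrable (fun ω => U i (t + 1) ω - U i t ω) P)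
    (hdrift : ∀ i t, ∀ᵐ ω ∂P,
      (P[fun ω' => U i (t + 1) ω' - U i t ω' | F t]) ω
        = a i t ω * f i (U i t ω) - (1 - a i t ω) * g i (U i t ω)) :
    ∀ t, ∀ᵐ ω ∂P,
      (P[fun ω' =>
            (∑ i, (1 / (fplus i + gminus i))
                * (∑ j, 1 / (fplus j + gminus j))⁻¹ * U i (t + 1) ω')
            - (∑ i, (1 / (fplus i + gminus i))
                * (∑ j, 1 / (fplus j + gminus j))⁻¹ * U i t ω') | F t]) ω
        ≤ ((M : ℝ) - ∑ i, gminus i / (fplus i + gminus i))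
            * (∑ j, 1 / (fplus j + gminus j))⁻¹ := by
  intro t
  set w : Fin N → ℝ := fun i => 1 / (fplus i + gminus i) * (∑ j, 1 / (fplus j + gminus j))⁻¹
  have hc : ∀ i, 0 < fplus i + gminus i := fun i => add_pos (hfp i) (hgm i)
  have hw : ∀ i, 0 ≤ w i := fun i =>
    mul_nonneg (one_div_pos.mpr (hc i)).le
      (inv_nonneg.mpr (Finset.sum_nonneg fun j _ => (one_div_pos.mpr (hc j)).le))
  have hsplit : (fun ω => (∑ i, w i * U i (t + 1) ω) - ∑ i, w i * U i t ω)
      = fun ω => ∑ i, w i * (U i (t + 1) ω - U i t ω) := by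
    simp only [mul_sub, Finset.sum_sub_distrib]
  filter_upwards [condExp_sum_mul w fun i _ => hint i t,
    ae_all_iff.mpr fun i => hdrift i t] with ω hcond hdrifts
  rw [hsplit, hcond]
  calc ∑ i, w i * P[fun ω' => U i (t + 1) ω' - U i t ω' | F t] ω
      ≤ ∑ i, w i * (a i t ω * fplus i - (1 - a i t ω) * gminus i) := by
        refine Finset.sum_le_sum fun i _ => ?_
        rw [hdrifts i]
        exact mul_le_mul_of_nonneg_left (mul_sub_one_sub_mul_le_of_eq_zero_or_eq_one
          (ha01 i t ω) (hfub i _) (hglb i _)) (hw i)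
    _ = _ := by
        rw [sum_inv_mul_inv_sum_mul_drift_eq _ _ _ _ fun i _ => (hc i).ne', hasum t ω]

/-- Upper drift bound for the weighted welfare Ũ (ineq. (13)–(14)): regardless
of the policy, E[Ũ(t+1) − Ũ(t) | F_t] ≤ ζ̄((f_i⁺),(g_i⁻)). -/
theorem stmt_16 {Ω : Type*} {m0 : MeasurableSpace Ω} (P : Measure Ω)
    [IsProbabilityMeasure P] (F : Filtration ℕ m0)
    (N M : ℕ) (hN : 0 < N) (hM : 0 < M) (hMN : M ≤ N)
    (U : Fin N → ℕ → Ω → ℝ) (a : Fin N → ℕ → Ω → ℝ)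
    (f g : Fin N → ℝ → ℝ) (fplus gminus : Fin N → ℝ)
    (hfp : ∀ i, 0 < fplus i) (hgm : ∀ i, 0 < gminus i)
    (hfub : ∀ i x, f i x ≤ fplus i) (hglb : ∀ i x, gminus i ≤ g i x)
    (ha01 : ∀ i t ω, a i t ω = 0 ∨ a i t ω = 1)
    (hasum : ∀ t ω, ∑ i, a i t ω = (M : ℝ))
    (hint : ∀ i t, Integrable (fun ω => U i (t + 1) ω - U i t ω) P)
    (hdrift : ∀ i t, ∀ᵐ ω ∂P,
      (P[fun ω' => U i (t + 1) ω' - U i t ω' | F t]) ω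
        = a i t ω * f i (U i t ω) - (1 - a i t ω) * g i (U i t ω)) :
    ∀ t, ∀ᵐ ω ∂P,
      (P[fun ω' =>
            (∑ i, (1 / (fplus i + gminus i))
                * (∑ j, 1 / (fplus j + gminus j))⁻¹ * U i (t + 1) ω')
            - (∑ i, (1 / (fplus i + gminus i))
                * (∑ j, 1 / (fplus j + gminus j))⁻¹ * U i t ω') | F t]) ω
        ≤ ((M : ℝ) - ∑ i, gminus i / (fplus i + gminus i))
            * (∑ j, 1 / (fplus j + gminus j))⁻¹ :=
  stmt_16_general P F N M U a f g fplus gminus hfp hgm hfub hglb ha01 hasum hint hdrift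
end
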